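/- For all integers pp0, pp1, pp2, pp3, pp4, pp5, pp6, pp7, define (with all 'mod' reductions being nonnegative remainders modulo 2^16, XOR/AND/OR bitwise on two's-complement integers, and maj(x,y,z) = (x AND y) OR (x AND z) OR (y AND z)): l1pp0 = (pp0 XOR pp1 XOR pp2) mod 2^16, l1pp1 = (2·maj(pp0,pp1,pp2)) mod 2^16, l1pp2 = (pp3 XOR pp4 XOR pp5) mod 2^16, l1pp3 = (2·maj(pp3,pp4,pp5)) mod 2^16; l2pp0 = (l1pp0 XOR l1pp1 XOR l1pp2) mod 2^16, l2pp1 = (2·maj(l1pp0,l1pp1,l1pp2)) mod 2^16, l2pp2 = (l1pp3 XOR pp6 XOR pp7) mod 2^16, l2pp3 = (2·maj(l1pp3,pp6,pp7)) mod 2^16; l3pp0 = (l2pp0 XOR l2pp1 XOR l2pp2) mod 2^16, l3pp1 = (2·maj(l2pp0,l2pp1,l2pp2)) mod 2^16, l3pp2 = l2pp3; l4pp0 = (l3pp0 XOR l3pp1 XOR l3pp2) mod 2^16, l4pp1 = (2·maj(l3pp0,l3pp1,l3pp2)) mod 2^16. Then (l4pp0 + l4pp1) mod 2^16 = (pp0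 + pp1 + pp2 + pp3 + pp4 + pp5 + pp6 + pp7) mod 2^16. -/

import Mathlib

/-!
A 3:2 compressor is a row of full adders: at every bit position the xor is the sum bit and the
majority the carry bit. Peeling off the lowest bit, induction on `n` gives
`(x ^^^ y ^^^ z) + 2 * maj x y z ≡ x + y + z [ZMOD 2 ^ n]` for all `n`, hence equality on `ℤ`
(take `2 ^ n` larger than the difference).
Reducing mod `2 ^ 16` respects sums, so each compressor of the tree preserves the sum of its
inputs mod `2 ^ 16`; adding up the six compressor congruences, all intermediate vectors cancel.
-/

instance : XorOp ℤ := ⟨Int.xor⟩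
instance : AndOp ℤ := ⟨Int.land⟩
instance : OrOp ℤ := ⟨Int.lor⟩


/-- Bitwise majority of three integers. -/
def maj (x y z : ℤ) : ℤ := ((x &&& y) ||| (x &&& z)) ||| (y &&& z)

open Int

theorem Int.xor_bit (a b : Bool) (m n : ℤ) : bit a m ^^^ bit b n = bit (a ^^ b) (m ^^^ n) :=
  lxor_bit a m b n

theorem maj_bit (a b c : Bool) (x y z : ℤ) :
    maj (bit a x) (bit b y) (bit c z) = bit (a && b || a && c || b && c) (maj x y z) := by
  change lor (lor (land _ _) (land _ _)) (land _ _) = _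
  simp only [land_bit, lor_bit]
  rfl

theorem xor_xor_add_two_mul_maj_modEq_two_pow (n : ℕ) (x y z : ℤ) :
    (x ^^^ y ^^^ z) + 2 * maj x y z ≡ x + y + z [ZMOD 2 ^ n] := by
  induction n generalizing x y z with
  | zero => exact Int.modEq_one
  | succ n ih =>
    obtain ⟨a, x, rfl⟩ : ∃ a x', bit a x' = x := ⟨_, _, bit_decomp x⟩
    obtain ⟨b, y, rfl⟩ : ∃ b y', bit b y' = y := ⟨_, _, bit_decomp y⟩
    obtain ⟨c, z, rfl⟩ : ∃ c z', bit c z' = z := ⟨_, _, bit_decomp z⟩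
    have full_adder : cond (a ^^ b ^^ c) (1 : ℤ) 0 + 2 * cond (a && b || a && c || b && c) 1 0
        = cond a 1 0 + cond b 1 0 + cond c 1 0 := by
      cases a <;> cases b <;> cases c <;> rfl
    simp only [xor_bit, maj_bit]
    simp only [bit_val]
    calc _ = 2 * ((x ^^^ y ^^^ z) + 2 * maj x y z)
          + (cond (a ^^ b ^^ c) 1 0 + 2 * cond (a && b || a && c || b && c) 1 0) := by ring
      _ ≡ 2 * (x + y + z)
          + (cond (a ^^ b ^^ c) 1 0 + 2 * cond (a && b || a && c || b && c) 1 0)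
          [ZMOD 2 ^ (n + 1)] := by
        rw [pow_succ']
        exact (ih x y z).mul_left'.add_right _
      _ = _ := by rw [full_adder]; ring

theorem xor_xor_add_two_mul_maj (x y z : ℤ) : (x ^^^ y ^^^ z) + 2 * maj x y z = x + y + z := by
  set d := (x ^^^ y ^^^ z) + 2 * maj x y z - (x + y + z)
  have hdvd : (2 : ℤ) ^ d.natAbs ∣ d := (xor_xor_add_two_mul_maj_modEq_two_pow _ x y z).symm.dvd
  have hlt : |d| < 2 ^ d.natAbs := by
    rw [abs_eq_natAbs]
    exact_mod_cast d.natAbs.lt_two_pow_self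
  exact sub_eq_zero.mp (eq_zero_of_abs_lt_dvd hdvd hlt)

theorem xor_xor_emod_add_two_mul_maj_emod_modEq (m x y z : ℤ) :
    (x ^^^ y ^^^ z) % m + (2 * maj x y z) % m ≡ x + y + z [ZMOD m] := by
  rw [← xor_xor_add_two_mul_maj]
  exact (mod_modEq _ m).add (mod_modEq _ m)

/-- compress-lemma-8x8: the 8×8 multiplier compression tree sums its eight
    16-bit partial products modulo 2^16. -/
theorem compress_lemma_8x8 (pp0 pp1 pp2 pp3 pp4 pp5 pp6 pp7 : ℤ) :
    let l1pp0 := ((pp0 ^^^ pp1) ^^^ pp2) % 2 ^ 16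
    let l1pp1 := (2 * maj pp0 pp1 pp2) % 2 ^ 16
    let l1pp2 := ((pp3 ^^^ pp4) ^^^ pp5) % 2 ^ 16
    let l1pp3 := (2 * maj pp3 pp4 pp5) % 2 ^ 16
    let l2pp0 := ((l1pp0 ^^^ l1pp1) ^^^ l1pp2) % 2 ^ 16
    let l2pp1 := (2 * maj l1pp0 l1pp1 l1pp2) % 2 ^ 16
    let l2pp2 := ((l1pp3 ^^^ pp6) ^^^ pp7) % 2 ^ 16
    let l2pp3 := (2 * maj l1pp3 pp6 pp7) % 2 ^ 16
    let l3pp0 := ((l2pp0 ^^^ l2pp1) ^^^ l2pp2) % 2 ^ 16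
    let l3pp1 := (2 * maj l2pp0 l2pp1 l2pp2) % 2 ^ 16
    let l3pp2 := l2pp3
    let l4pp0 := ((l3pp0 ^^^ l3pp1) ^^^ l3pp2) % 2 ^ 16
    let l4pp1 := (2 * maj l3pp0 l3pp1 l3pp2) % 2 ^ 16
    (l4pp0 + l4pp1) % 2 ^ 16
      = (pp0 + pp1 + pp2 + pp3 + pp4 + pp5 + pp6 + pp7) % 2 ^ 16 := by
  intro l1pp0 l1pp1 l1pp2 l1pp3 l2pp0 l2pp1 l2pp2 l2pp3 l3pp0 l3pp1 l3pp2 l4pp0 l4pp1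
  have c1 : l1pp0 + l1pp1 ≡ pp0 + pp1 + pp2 [ZMOD 2 ^ 16] :=
    xor_xor_emod_add_two_mul_maj_emod_modEq _ _ _ _
  have c2 : l1pp2 + l1pp3 ≡ pp3 + pp4 + pp5 [ZMOD 2 ^ 16] :=
    xor_xor_emod_add_two_mul_maj_emod_modEq _ _ _ _
  have c3 : l2pp0 + l2pp1 ≡ l1pp0 + l1pp1 + l1pp2 [ZMOD 2 ^ 16] :=
    xor_xor_emod_add_two_mul_maj_emod_modEq _ _ _ _
  have c4 : l2pp2 + l2pp3 ≡ l1pp3 + pp6 + pp7 [ZMOD 2 ^ 16] :=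
    xor_xor_emod_add_two_mul_maj_emod_modEq _ _ _ _
  have c5 : l3pp0 + l3pp1 ≡ l2pp0 + l2pp1 + l2pp2 [ZMOD 2 ^ 16] :=
    xor_xor_emod_add_two_mul_maj_emod_modEq _ _ _ _
  have c6 : l4pp0 + l4pp1 ≡ l3pp0 + l3pp1 + l2pp3 [ZMOD 2 ^ 16] :=
    xor_xor_emod_add_two_mul_maj_emod_modEq _ _ _ _
  refine modEq_iff_dvd.mpr ?_
  convert Int.dvd_add c1.dvd (Int.dvd_add c2.dvd (Int.dvd_add c3.dvd
    (Int.dvd_add c4.dvd (Int.dvd_add c5.dvd c6.dvd)))) using 1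
  ring
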